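/- Let H be a k-uniform hypergraph. For integers s ≥ 1 and r ≥ ks, the adjacency matrix of the line multigraph of the power hypergraph H^r_s satisfies A(L(H^r_s)) = s·A(L(H)); consequently its characteristic polynomial satisfies P_{L(H^r_s)}(λ) = s^m P_{L(H)}(λ/s) and E(L(H^r_s)) = s·E(L(H)). -/

import Mathlib

open Matrix BigOperators Finset

/-!
Two distinct edges of `H^r_s` meet only in the copies of the vertices of `E e ∩ E f`, `s` copies
each, because the added vertices `ς_e` belong to `e` alone; hence `A(L(H^r_s)) = s • A(L(H))`.
Scaling a Hermitian matrix by `c > 0` turns its characteristic polynomial into `c^m P(λ / c)`,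
so its eigenvalue multiset is multiplied by `c`, and so is its energy.
-/

/-- Adjacency matrix of the line multigraph of a hypergraph with vertex type `V` and
edges `E : Fin m → Finset V`: the `(e,f)`-entry is `|E e ∩ E f|` for `e ≠ f`, `0` on
the diagonal. -/
noncomputable def lineAdj {V : Type*} [DecidableEq V] {m : ℕ} (E : Fin m → Finset V) :
    Matrix (Fin m) (Fin m) ℝ :=
  fun e f => if e = f then 0 else ((E e ∩ E f).card : ℝ)

/-- Power hypergraph `H^r_s`: each vertex `v` is replaced by `s` copies and each edge
gets `r - k*s` extra new vertices. Edges are indexed as in `H`. -/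
noncomputable def powerEdges {n m : ℕ} (k s r : ℕ) (E : Fin m → Finset (Fin n)) :
    Fin m → Finset ((Fin n × Fin s) ⊕ (Fin m × Fin (r - k * s))) :=
  fun e =>
    ((E e ×ˢ (univ : Finset (Fin s))).map (Function.Embedding.inl)) ∪
      (({e} ×ˢ (univ : Finset (Fin (r - k * s)))).map (Function.Embedding.inr))

lemma powerEdges_inter_of_ne {n m : ℕ} (k s r : ℕ) (E : Fin m → Finset (Fin n)) {e f : Fin m}
    (hef : e ≠ f) :
    powerEdges k s r E e ∩ powerEdges k s r E f =
      ((E e ∩ E f) ×ˢ (univ : Finset (Fin s))).map Function.Embedding.inl := by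
  ext (p | ⟨g, j⟩)
  · simp [powerEdges]
  · simpa [powerEdges] using fun (h : e = g) => h ▸ hef.symm

lemma lineAdj_powerEdges {n m : ℕ} (k s r : ℕ) (E : Fin m → Finset (Fin n)) :
    lineAdj (powerEdges k s r E) = (s : ℝ) • lineAdj E := by
  ext e f
  by_cases hef : e = f
  · simp [lineAdj, hef]
  · simp [lineAdj, hef, powerEdges_inter_of_ne k s r E hef, mul_comm]

namespace Matrix

variable {n : Type*} [Fintype n] [DecidableEq n]

lemma eval_charpoly_smul {K : Type*} [Field K] (A : Matrix n n K) {c : K} (hc : c ≠ 0) (t : K) :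
    (c • A).charpoly.eval t = c ^ Fintype.card n * A.charpoly.eval (t / c) := by
  rw [eval_charpoly, eval_charpoly, ← det_smul, smul_sub, scalar_apply, scalar_apply,
    ← diagonal_smul]
  simp only [Pi.smul_def, smul_eq_mul, mul_div_cancel₀ _ hc]

namespace IsHermitian

open Polynomial

variable {𝕜 : Type*} [RCLike 𝕜] {A B : Matrix n n 𝕜} {c : ℝ}

lemma charpoly_eq_prod_of_eq_smul (hA : A.IsHermitian) (hc : c ≠ 0) (hB : B = c • A) :
    B.charpoly = ∏ i, (X - C ((c * hA.eigenvalues i : ℝ) : 𝕜)) := by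
  refine Polynomial.funext fun t => ?_
  have hc' : (c : 𝕜) ≠ 0 := RCLike.ofReal_ne_zero.mpr hc
  rw [hB, RCLike.real_smul_eq_coe_smul (K := 𝕜), eval_charpoly_smul A hc', hA.charpoly_eq,
    eval_prod, eval_prod, ← Finset.card_univ, ← prod_const, ← prod_mul_distrib]
  refine prod_congr rfl fun i _ => ?_
  simp only [eval_sub, eval_X, eval_C, RCLike.ofReal_mul]
  field_simp

lemma eigenvalues_map_eq_of_eq_smul (hA : A.IsHermitian) (hB : B.IsHermitian) (hc : c ≠ 0)
    (hBA : B = c • A) :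
    univ.val.map hB.eigenvalues = univ.val.map fun i => c * hA.eigenvalues i := by
  apply Multiset.map_injective (RCLike.ofReal_injective (K := 𝕜))
  rw [Multiset.map_map, Multiset.map_map, ← hB.roots_charpoly_eq_eigenvalues,
    hA.charpoly_eq_prod_of_eq_smul hc hBA,
    roots_prod _ _ (prod_ne_zero_iff.mpr fun i _ => X_sub_C_ne_zero _)]
  simp only [roots_X_sub_C, Multiset.bind_singleton, Function.comp_def]

lemma sum_abs_eigenvalues_of_eq_smul (hA : A.IsHermitian) (hB : B.IsHermitian) (hc : 0 < c)
    (hBA : B = c • A) :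
    ∑ i, |hB.eigenvalues i| = c * ∑ i, |hA.eigenvalues i| := by
  have h := congrArg (fun M => (M.map abs).sum) (hA.eigenvalues_map_eq_of_eq_smul hB hc.ne' hBA)
  simp only [Multiset.map_map, Function.comp_def, abs_mul, abs_of_pos hc] at h
  rw [mul_sum]
  exact h

end IsHermitian

end Matrix

theorem stmt18_general {n m k s r : ℕ} (E : Fin m → Finset (Fin n))
    (hs : 1 ≤ s)
    (hL : (lineAdj E).IsHermitian)
    (hL' : (lineAdj (powerEdges k s r E)).IsHermitian) :
    lineAdj (powerEdges k s r E) = (s : ℝ) • lineAdj E ∧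
    (∀ lam : ℝ, (lineAdj (powerEdges k s r E)).charpoly.eval lam =
      (s : ℝ) ^ m * (lineAdj E).charpoly.eval (lam / s)) ∧
    (∑ i, |hL'.eigenvalues i|) = s * ∑ i, |hL.eigenvalues i| := by
  have hs_pos : (0 : ℝ) < s := Nat.cast_pos.mpr hs
  have hpow := lineAdj_powerEdges k s r E
  refine ⟨hpow, fun lam => ?_, hL.sum_abs_eigenvalues_of_eq_smul hL' hs_pos hpow⟩
  rw [hpow, eval_charpoly_smul _ hs_pos.ne', Fintype.card_fin]

/-- `A(L(H^r_s)) = s • A(L(H))`, hence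
`P_{L(H^r_s)}(λ) = s^m P_{L(H)}(λ/s)` and `E(L(H^r_s)) = s E(L(H))`. -/
theorem stmt18 {n m k s r : ℕ} (E : Fin m → Finset (Fin n))
    (hk2 : 2 ≤ k) (hk : ∀ e, (E e).card = k) (hs : 1 ≤ s) (hr : k * s ≤ r)
    (hL : (lineAdj E).IsHermitian)
    (hL' : (lineAdj (powerEdges k s r E)).IsHermitian) :
    lineAdj (powerEdges k s r E) = (s : ℝ) • lineAdj E ∧
    (∀ lam : ℝ, (lineAdj (powerEdges k s r E)).charpoly.eval lam =
      (s : ℝ) ^ m * (lineAdj E).charpoly.eval (lam / s)) ∧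
    (∑ i, |hL'.eigenvalues i|) = s * ∑ i, |hL.eigenvalues i| :=
  stmt18_general E hs hL hL'
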